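/- arXiv:2009.06481 — 2 statements merged into one kernel-verified Lean document; each statement's English description precedes it below -/
import Mathlib

section
/- Let R be a commutative Noetherian ring, let Z be a specialization-closed subset of Spec R, let M be a finitely generated R-module and let N be an arbitrary R-module. Then gr_R(Z, Hom_R(M, N)) ≥ min{ 2, gr_R(Z, N) }. -/
/-! Common definitions: local cohomology with respect to specialization-closed subsets,
depth, grade, homological dimensions, Tate homology, etc. -/

open CategoryTheory

universe u

section SpecClosed

variable (R : Type u) [CommRing R]

/-- A subset of the prime spectrum is specialization-closed if it is closed under
passing to larger primes. -/
def IsSpecClosed (Z : Set (PrimeSpectrum R)) : Prop :=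
  ∀ ⦃p q : PrimeSpectrum R⦄, p ∈ Z → p.asIdeal ≤ q.asIdeal → q ∈ Z

variable (Z : Set (PrimeSpectrum R))

/-- The `Z`-torsion submodule `Γ_Z(M) = { m | Supp(Rm) ⊆ Z }` (described via annihilators:
`Supp(Rm) = V(Ann m)`). -/
def torsionZ (M : Type u) [AddCommGroup M] [Module R M] : Submodule R M where
  carrier := {m : M | ∀ p : PrimeSpectrum R, (R ∙ m).annihilator ≤ p.asIdeal → p ∈ Z}
  zero_mem' := by
    intro p hp
    exfalso
    apply p.isPrime.ne_top
    rw [eq_top_iff]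
    refine le_trans ?_ hp
    intro r _
    rw [Submodule.mem_annihilator_span_singleton, smul_zero]
  add_mem' := by
    intro a b ha hb p hp
    have h : (R ∙ a).annihilator ⊓ (R ∙ b).annihilator ≤ p.asIdeal := by
      refine le_trans ?_ hp
      intro r hr
      rw [Submodule.mem_inf, Submodule.mem_annihilator_span_singleton,
        Submodule.mem_annihilator_span_singleton] at hr
      rw [Submodule.mem_annihilator_span_singleton, smul_add, hr.1, hr.2, add_zero]
    rcases (Ideal.IsPrime.inf_le p.isPrime).mp h with h' | h'
    · exact ha p h'
    · exact hb p h'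
  smul_mem' := by
    intro c m hm p hp
    refine hm p (le_trans ?_ hp)
    intro r hr
    rw [Submodule.mem_annihilator_span_singleton] at hr ⊢
    rw [smul_comm, hr, smul_zero]

lemma torsionZ_map_mem {M N : Type u} [AddCommGroup M] [Module R M] [AddCommGroup N]
    [Module R N] (f : M →ₗ[R] N) (m : M) (hm : m ∈ torsionZ R Z M) :
    f m ∈ torsionZ R Z N := by
  intro p hp
  refine hm p (le_trans ?_ hp)
  intro r hr
  rw [Submodule.mem_annihilator_span_singleton] at hr ⊢
  rw [← map_smul, hr, map_zero]

/-- The `Z`-torsion functor `Γ_Z : Mod_R ⥤ Mod_R`. -/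
@[simps]
noncomputable def gammaZ : ModuleCat.{u} R ⥤ ModuleCat.{u} R where
  obj M := ModuleCat.of R (torsionZ R Z M)
  map {M N} f := ModuleCat.ofHom (LinearMap.restrict f.hom (fun m hm => torsionZ_map_mem R Z f.hom m hm))
  map_id _ := by ext; rfl
  map_comp _ _ := by ext; rfl

instance : (gammaZ R Z).Additive where
  map_add := by intros; ext; rfl

/-- Local cohomology with respect to a subset `Z ⊆ Spec R`, defined as the
right derived functors of the `Z`-torsion functor `Γ_Z`. -/
noncomputable def localCohomologyZ (i : ℕ) : ModuleCat.{u} R ⥤ ModuleCat.{u} R :=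
  (gammaZ R Z).rightDerived i

/-- `H^i_Z(M)`, the `i`-th local cohomology of `M` with respect to `Z`. -/
noncomputable abbrev HZ (i : ℕ) (M : Type u) [AddCommGroup M] [Module R M] :=
  ((localCohomologyZ R Z i).obj (ModuleCat.of R M))

/-- The grade of `M` with respect to `Z`: the least `i` with `H^i_Z(M) ≠ 0`
(`⊤` if there is no such `i`). -/
noncomputable def gradeZ (M : Type u) [AddCommGroup M] [Module R M] : ℕ∞ :=
  sInf {i : ℕ∞ | ∃ n : ℕ, i = n ∧ Nontrivial (HZ R Z n M)}

end SpecClosed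

/-- The closed subset `V(m) ⊆ Spec R` of a local ring; local cohomology with respect to it
is the classical local cohomology `H^i_m`. -/
def maxSet (R : Type u) [CommRing R] [IsLocalRing R] : Set (PrimeSpectrum R) :=
  {p | IsLocalRing.maximalIdeal R ≤ p.asIdeal}

section Depth

/-- The depth of a module over a local ring: the supremum of lengths of weakly regular
sequences on `M` contained in the maximal ideal. (The zero module has depth `⊤`.) -/
noncomputable def moduleDepth (R : Type u) [CommRing R] [IsLocalRing R]
    (M : Type u) [AddCommGroup M] [Module R M] : ℕ∞ :=
  sSup {n : ℕ∞ | ∃ rs : List R, (rs.length : ℕ∞) = n ∧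
    (∀ r ∈ rs, r ∈ IsLocalRing.maximalIdeal R) ∧ RingTheory.Sequence.IsWeaklyRegular M rs}

/-- The depth of the localized module `M_p` over the local ring `R_p`. -/
noncomputable def localizedDepth (R : Type u) [CommRing R] (p : PrimeSpectrum R)
    (M : Type u) [AddCommGroup M] [Module R M] : ℕ∞ :=
  moduleDepth (Localization.AtPrime p.asIdeal) (LocalizedModule p.asIdeal.primeCompl M)

/-- The height of a prime ideal, as the height of the corresponding point of `Spec R`. -/
noncomputable def primeHeight {R : Type u} [CommRing R] (p : PrimeSpectrum R) : ℕ∞ :=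
  Order.height p

/-- Serre's condition `(S_n)`: `depth M_p ≥ min(n, ht p)` for all primes `p`. -/
def SerreSn (R : Type u) [CommRing R] (M : Type u) [AddCommGroup M] [Module R M]
    (n : ℕ) : Prop :=
  ∀ p : PrimeSpectrum R, min (n : ℕ∞) (primeHeight p) ≤ localizedDepth R p M

/-- A module `N` over a local ring `S` is maximal Cohen–Macaulay if `depth N = dim S`
(for nonzero finitely generated `N`; the zero module is trivially allowed since its
depth is `⊤`). -/
def IsMaximalCohenMacaulay (S : Type u) [CommRing S] [IsLocalRing S]
    (N : Type u) [AddCommGroup N] [Module S N] : Prop :=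
  ringKrullDim S ≤ (moduleDepth S N : WithBot ℕ∞)

/-- A local ring is Cohen–Macaulay if it is Noetherian and its depth equals its dimension. -/
def IsCohenMacaulayLocalRing (R : Type u) [CommRing R] [IsLocalRing R] : Prop :=
  IsNoetherianRing R ∧ (moduleDepth R R : WithBot ℕ∞) = ringKrullDim R

/-- A ring is regular local if it is Noetherian local and its maximal ideal is generated
by `dim R` elements. -/
def IsRegularLocal (R : Type u) [CommRing R] : Prop :=
  ∃ _ : IsLocalRing R, IsNoetherianRing R ∧
    ∃ s : Finset R, Ideal.span (s : Set R) = IsLocalRing.maximalIdeal R ∧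
      ((s.card : ℕ∞) : WithBot ℕ∞) = ringKrullDim R

/-- A local ring is a complete intersection if it is Noetherian and its `m`-adic completion
is a quotient of a regular local ring by an ideal generated by a regular sequence. -/
def IsCompleteIntersectionLocal (R : Type u) [CommRing R] [IsLocalRing R] : Prop :=
  IsNoetherianRing R ∧
  ∃ (Q : Type u) (_ : CommRing Q), IsRegularLocal Q ∧
    ∃ rs : List Q, RingTheory.Sequence.IsRegular Q rs ∧
      Nonempty ((AdicCompletion (IsLocalRing.maximalIdeal R) R) ≃+* (Q ⧸ Ideal.ofList rs))

end Depth

section HomologicalAlgebra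

variable (R : Type u) [CommRing R]

/-- `Ext_R^n(M, N)`, as an object of `ModuleCat R` (derived functor `Ext` of `Hom`). -/
noncomputable abbrev ExtMod (n : ℕ) (M N : Type u) [AddCommGroup M] [Module R M]
    [AddCommGroup N] [Module R N] : ModuleCat.{u} R :=
  ((Ext R (ModuleCat.{u} R) n).obj (Opposite.op (ModuleCat.of R M))).obj (ModuleCat.of R N)

/-- `Tor^R_n(M, N)`, as an object of `ModuleCat R` (derived functor of the tensor product). -/
noncomputable abbrev TorMod (n : ℕ) (M N : Type u) [AddCommGroup M] [Module R M]
    [AddCommGroup N] [Module R N] : ModuleCat.{u} R :=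
  ((Tor (ModuleCat.{u} R) n).obj (ModuleCat.of R M)).obj (ModuleCat.of R N)

/-- A module `N` is Tor-rigid if for every module `X`, the vanishing of a single
`Tor_j(X, N)` with `j ≥ 1` forces the vanishing of `Tor_i(X, N)` for all `i ≥ j`. -/
def IsTorRigid (N : Type u) [AddCommGroup N] [Module R N] : Prop :=
  ∀ (X : Type u) [AddCommGroup X] [Module R X], ∀ j : ℕ, 1 ≤ j →
    Subsingleton (TorMod R j X N) → ∀ i, j ≤ i → Subsingleton (TorMod R i X N)

/-- `M` has projective dimension at most `n`. -/
def pdLE : (n : ℕ) → (M : Type u) → [AddCommGroup M] → [Module R M] → Prop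
  | 0, M, _, _ => Module.Projective R M
  | (n+1), M, _, _ => ∃ (P : Type u) (_ : AddCommGroup P) (_ : Module R P)
      (f : P →ₗ[R] M), Module.Projective R P ∧ Function.Surjective f ∧
        pdLE n (LinearMap.ker f)

open Classical in
/-- The projective dimension of a module: `⊥` for the zero module, `⊤` if infinite. -/
noncomputable def projDim (M : Type u) [AddCommGroup M] [Module R M] : WithBot ℕ∞ :=
  if Subsingleton M then ⊥
  else sInf {d : WithBot ℕ∞ | ∃ n : ℕ, d = (n : ℕ∞) ∧ pdLE R n M}

/-- `M` has injective dimension at most `n`. -/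
def idLE : (n : ℕ) → (M : Type u) → [AddCommGroup M] → [Module R M] → Prop
  | 0, M, _, _ => Module.Injective R M
  | (n+1), M, _, _ => ∃ (E : Type u) (_ : AddCommGroup E) (_ : Module R E)
      (f : M →ₗ[R] E), Module.Injective R E ∧ Function.Injective f ∧
        idLE n (E ⧸ LinearMap.range f)

/-- A local ring is Gorenstein if it is Noetherian and of finite self-injective dimension. -/
def IsGorensteinLocal : Prop :=
  IsLocalRing R ∧ IsNoetherianRing R ∧ ∃ n : ℕ, idLE R n R

/-- `M` is totally reflexive (i.e. of Gorenstein dimension zero): it is finitely generated,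
reflexive, and `Ext^i(M, R) = 0 = Ext^i(M^*, R)` for all `i ≥ 1`. -/
def IsTotallyReflexive (M : Type u) [AddCommGroup M] [Module R M] : Prop :=
  Module.Finite R M ∧ Function.Bijective (Module.Dual.eval R M) ∧
    ∀ i : ℕ, 1 ≤ i → Subsingleton (ExtMod R i M R) ∧
      Subsingleton (ExtMod R i (Module.Dual R M) R)

/-- `M` has Gorenstein dimension at most `n`. -/
def GdimLE : (n : ℕ) → (M : Type u) → [AddCommGroup M] → [Module R M] → Prop
  | 0, M, _, _ => IsTotallyReflexive R M
  | (n+1), M, _, _ => ∃ (G : Type u) (_ : AddCommGroup G) (_ : Module R G)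
      (f : G →ₗ[R] M), IsTotallyReflexive R G ∧ Function.Surjective f ∧
        GdimLE n (LinearMap.ker f)

/-- The non-free locus `NF(M) = { p | M_p is not R_p-free }`. -/
def nonFreeLocus (M : Type u) [AddCommGroup M] [Module R M] : Set (PrimeSpectrum R) :=
  {p | ¬ Module.Free (Localization.AtPrime p.asIdeal) (LocalizedModule p.asIdeal.primeCompl M)}

/-- `M` is locally free on the punctured spectrum of the local ring `R`. -/
def LocFreeOnPunctured [IsLocalRing R] (M : Type u) [AddCommGroup M] [Module R M] : Prop :=
  ∀ p : PrimeSpectrum R, p.asIdeal ≠ IsLocalRing.maximalIdeal R →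
    Module.Free (Localization.AtPrime p.asIdeal) (LocalizedModule p.asIdeal.primeCompl M)

/-- The minimal number of generators of a module. -/
noncomputable def minGens (M : Type u) [AddCommGroup M] [Module R M] : ℕ :=
  sInf {n : ℕ | ∃ s : Finset M, s.card = n ∧ Submodule.span R (s : Set M) = ⊤}

/-- The complexity `cx_R(M, N)` of a pair of modules: the least `b` such that
`ν_R(Ext^n_R(M, N)) ≤ a·n^(b-1)` for some `a` and all large `n` (`⊤` if there is none). -/
noncomputable def complexityPair (M N : Type u) [AddCommGroup M] [Module R M]
    [AddCommGroup N] [Module R N] : ℕ∞ :=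
  sInf {c : ℕ∞ | ∃ b : ℕ, c = b ∧ ∃ a : ℝ, ∃ n₀ : ℕ, ∀ n : ℕ, n₀ ≤ n →
    (minGens R (ExtMod R n M N) : ℝ) ≤ a * (n : ℝ) ^ ((b : ℝ) - 1)}

/-- The grade of the pair `(A, K)`: the least `i` with `Ext^i_R(A, K) ≠ 0`
(`⊤` if there is none). -/
noncomputable def gradePair (A K : Type u) [AddCommGroup A] [Module R A]
    [AddCommGroup K] [Module R K] : ℕ∞ :=
  sInf {i : ℕ∞ | ∃ n : ℕ, i = n ∧ Nontrivial (ExtMod R n A K)}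

end HomologicalAlgebra

section Tate

variable (R : Type u) [CommRing R]

/-- A complete resolution of an `R`-module `M`: a totally acyclic complex `T` of finitely
generated free modules, a projective resolution `P` of `M`, and a chain map `τ : T ⟶ P`
which is an isomorphism in all sufficiently high degrees. -/
structure CompleteResolution (M : Type u) [AddCommGroup M] [Module R M] where
  /-- the totally acyclic complex -/
  T : ChainComplex (ModuleCat.{u} R) ℤ
  /-- the projective resolution of `M` -/
  P : ChainComplex (ModuleCat.{u} R) ℤ
  free : ∀ i : ℤ, Module.Free R (T.X i)
  fin : ∀ i : ℤ, Module.Finite R (T.X i)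
  t_exact : ∀ i : ℤ, Function.Exact (T.d (i+1) i) (T.d i (i-1))
  t_dual_exact : ∀ i : ℤ, Function.Exact
    (LinearMap.dualMap ((T.d i (i-1)).hom : T.X i →ₗ[R] T.X (i-1)))
    (LinearMap.dualMap ((T.d (i+1) i).hom : T.X (i+1) →ₗ[R] T.X i))
  proj : ∀ i : ℤ, Projective (P.X i)
  p_bounded : ∀ i : ℤ, i < 0 → Subsingleton (P.X i)
  p_exact : ∀ i : ℤ, i ≠ 0 → Function.Exact (P.d (i+1) i) (P.d i (i-1))
  π : P.X 0 →ₗ[R] M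
  π_surj : Function.Surjective π
  π_exact : Function.Exact (P.d 1 0) π
  τ : T ⟶ P
  bound : ℤ
  τ_iso : ∀ i : ℤ, bound ≤ i → Function.Bijective (τ.f i)

/-- The Tate homology `TateTor^R_i(M, N)` computed from a complete resolution of `M`: the
degree `i` homology of `T ⊗_R N`. -/
noncomputable abbrev tateTor {M : Type u} [AddCommGroup M] [Module R M]
    (C : CompleteResolution R M) (N : Type u) [AddCommGroup N] [Module R N] (i : ℤ) :=
  (LinearMap.ker (LinearMap.rTensor N ((C.T.d i (i-1)).hom : C.T.X i →ₗ[R] C.T.X (i-1)))) ⧸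
    (Submodule.comap
      (LinearMap.ker (LinearMap.rTensor N ((C.T.d i (i-1)).hom : C.T.X i →ₗ[R] C.T.X (i-1)))).subtype
      (LinearMap.range (LinearMap.rTensor N ((C.T.d (i+1) i).hom : C.T.X (i+1) →ₗ[R] C.T.X i))))

end Tate

section Frobenius

variable (R : Type u) [CommRing R]

/-- `R` viewed as an `R`-module via the `n`-th iterate of the Frobenius endomorphism
`φ(a) = a^p`: the action is `r · b = r^(p^n) * b`. -/
def FrobeniusTwist (p : ℕ) (n : ℕ) : Type u := R

instance (p n : ℕ) : AddCommGroup (FrobeniusTwist R p n) := inferInstanceAs (AddCommGroup R)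

noncomputable instance (p n : ℕ) [ExpChar R p] : Module R (FrobeniusTwist R p n) :=
  Module.compHom R (iterateFrobenius R p n)

end Frobenius

section Syzygy

/-- `S` is an `i`-th syzygy of the residue field of the local ring `R`, computed from
minimal free covers. -/
def IsMinSyzygyOfResidueField (R : Type u) [CommRing R] [IsLocalRing R] :
    (i : ℕ) → (S : Type u) → [AddCommGroup S] → [Module R S] → Prop
  | 0, S, _, _ => Nonempty (S ≃ₗ[R] IsLocalRing.ResidueField R)
  | (i+1), S, _, _ => ∃ (N : Type u) (_ : AddCommGroup N) (_ : Module R N)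
      (F : Type u) (_ : AddCommGroup F) (_ : Module R F) (f : F →ₗ[R] N),
      Module.Free R F ∧ Module.Finite R F ∧ IsMinSyzygyOfResidueField R i N ∧
      Function.Surjective f ∧
      LinearMap.ker f ≤ (IsLocalRing.maximalIdeal R) • (⊤ : Submodule R F) ∧
      Nonempty (S ≃ₗ[R] LinearMap.ker f)

end Syzygy

section CIDim

variable (R : Type u) [CommRing R] [IsLocalRing R]

/-- `M` has finite complete intersection dimension: there is a quasi-deformation
`R → A ↞ Q` (with `R → A` faithfully flat local and `Q ↠ A` surjective local with kernel
generated by a regular sequence) such that `pd_Q(A ⊗_R M)` is finite. -/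
def HasFiniteCIDim (M : Type u) [AddCommGroup M] [Module R M] : Prop :=
  ∃ (A : Type u) (_ : CommRing A) (_ : IsLocalRing A)
    (Q : Type u) (_ : CommRing Q) (_ : IsLocalRing Q)
    (φ : R →+* A) (σ : Q →+* A),
      IsLocalHom φ ∧ IsLocalHom σ ∧ Function.Surjective σ ∧
      (∃ rs : List Q, RingHom.ker σ = Ideal.ofList rs ∧ RingTheory.Sequence.IsRegular Q rs) ∧
      (letI : Module R A := Module.compHom A φ
       Module.FaithfullyFlat R A ∧
       (letI : SMulCommClass R A A := ⟨fun r a b => mul_left_comm (φ r) a b⟩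
        letI : Module Q (TensorProduct R A M) := Module.compHom (TensorProduct R A M) σ
        ∃ n : ℕ, pdLE Q n (TensorProduct R A M)))

end CIDim

/-!
Low-degree local cohomology can be read off the start `0 → L → E → E¹ → ⋯` of an injective
resolution: `H⁰_Z(L) = Γ_Z(L)`, and `H¹_Z(L) = 0` exactly when every `Z`-torsion class of `E ⧸ L`
lifts to a `Z`-torsion element of `E`, a lifting condition that does not depend on the injective
module `E ⊇ L`. Present `M` as `R^n ⧸ K`. Then `Hom(M, N)` is the kernel of
`N^n ≅ Hom(R^n, N) → Hom(K, N)`. If `Γ_Z(N) = 0` then `Γ_Z(Hom(-, N)) = 0`; if moreover `N ⊆ E` has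
the lifting property, then so does `N^n ⊆ E^n`, and it descends to the kernel of a map into the
`Z`-torsion-free module `Hom(K, N)`.
-/

section

variable {R : Type u} [CommRing R] {Z : Set (PrimeSpectrum R)}

local notation "Γ" => torsionZ R Z

lemma mem_torsionZ_of_annihilator_le {M N : Type u} [AddCommGroup M] [Module R M]
    [AddCommGroup N] [Module R N] {m : M} (hm : m ∈ Γ M) {x : N}
    (h : ∀ r : R, r • m = 0 → r • x = 0) : x ∈ Γ N := fun p hp =>
  hm p <| le_trans (fun r hr => by
    rw [Submodule.mem_annihilator_span_singleton] at hr ⊢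
    exact h r hr) hp

lemma mem_torsionZ_of_injective {M N : Type u} [AddCommGroup M] [Module R M]
    [AddCommGroup N] [Module R N] {f : M →ₗ[R] N} (hf : Function.Injective f) {m : M}
    (h : f m ∈ Γ N) : m ∈ Γ M :=
  mem_torsionZ_of_annihilator_le h fun r hr => hf (by rw [map_smul, hr, map_zero])

lemma pi_mem_torsionZ {ι : Type} [Finite ι] {M : ι → Type u} [∀ i, AddCommGroup (M i)]
    [∀ i, Module R (M i)] {m : ∀ i, M i} (hm : ∀ i, m i ∈ Γ (M i)) : m ∈ Γ (∀ i, M i) := by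
  classical
  have := Fintype.ofFinite ι
  rw [← Finset.univ_sum_single m]
  exact Submodule.sum_mem _ fun i _ => torsionZ_map_mem R Z (LinearMap.single R M i) _ (hm i)

lemma torsionZ_linearMap_eq_bot {L N : Type u} [AddCommGroup L] [Module R L]
    [AddCommGroup N] [Module R N] (hN : Γ N = ⊥) : Γ (L →ₗ[R] N) = ⊥ := by
  refine (Submodule.eq_bot_iff _).2 fun f hf => LinearMap.ext fun x => ?_
  have hfx : f x ∈ Γ N := mem_torsionZ_of_annihilator_le hf fun r hr => by
    rw [← LinearMap.smul_apply, hr, LinearMap.zero_apply]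
  simpa [hN] using hfx

lemma surjOn_torsionZ_mkQ_range_piMap {ι : Type} [Finite ι] {N E : ι → Type u}
    [∀ i, AddCommGroup (N i)] [∀ i, Module R (N i)] [∀ i, AddCommGroup (E i)]
    [∀ i, Module R (E i)] (e : ∀ i, N i →ₗ[R] E i)
    (he : ∀ i, Set.SurjOn (LinearMap.range (e i)).mkQ (Γ (E i))
      (Γ (E i ⧸ LinearMap.range (e i)))) :
    Set.SurjOn (LinearMap.range (LinearMap.piMap e)).mkQ (Γ (∀ i, E i))
      (Γ ((∀ i, E i) ⧸ LinearMap.range (LinearMap.piMap e))) := by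
  intro q hy
  obtain ⟨y, rfl⟩ := Submodule.mkQ_surjective _ q
  have hle : ∀ i, LinearMap.range (LinearMap.piMap e) ≤
      (LinearMap.range (e i)).comap (LinearMap.proj i) := by
    rintro i _ ⟨n, rfl⟩
    exact ⟨n i, rfl⟩
  have hyi : ∀ i, (LinearMap.range (e i)).mkQ (y i) ∈ Γ (E i ⧸ LinearMap.range (e i)) := by
    intro i
    have := torsionZ_map_mem R Z
      ((LinearMap.range (LinearMap.piMap e)).mapQ _ (LinearMap.proj i) (hle i)) _ hy
    rwa [Submodule.mkQ_apply, Submodule.mapQ_apply] at this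
  choose w hw hwy using fun i => he i (hyi i)
  choose n hn using fun i => (Submodule.Quotient.eq _).1 (hwy i)
  exact ⟨w, pi_mem_torsionZ hw, (Submodule.Quotient.eq _).2 ⟨n, funext hn⟩⟩

lemma surjOn_torsionZ_mkQ_range_of_injective {L E E' : Type u} [AddCommGroup L] [Module R L]
    [AddCommGroup E] [Module R E] [Module.Injective R E]
    [AddCommGroup E'] [Module R E'] [Module.Injective R E']
    {e : L →ₗ[R] E} {e' : L →ₗ[R] E'} (he : Function.Injective e) (he' : Function.Injective e')
    (h : Set.SurjOn (LinearMap.range e).mkQ (Γ E) (Γ (E ⧸ LinearMap.range e))) :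
    Set.SurjOn (LinearMap.range e').mkQ (Γ E') (Γ (E' ⧸ LinearMap.range e')) := by
  obtain ⟨φ, hφ⟩ := Module.Injective.extension_property R E' L E e he e'
  obtain ⟨ψ, hψ⟩ := Module.Injective.extension_property R E L E' e' he' e
  have hφe (l : L) : φ (e l) = e' l := LinearMap.congr_fun hφ l
  have hψe (l : L) : ψ (e' l) = e l := LinearMap.congr_fun hψ l
  intro q hy
  obtain ⟨y, rfl⟩ := Submodule.mkQ_surjective _ q
  have hle : LinearMap.range e' ≤ (LinearMap.range e).comap ψ := by
    rintro _ ⟨l, rfl⟩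
    exact ⟨l, (hψe l).symm⟩
  have hψy : (LinearMap.range e).mkQ (ψ y) ∈ Γ (E ⧸ LinearMap.range e) := by
    have := torsionZ_map_mem R Z ((LinearMap.range e').mapQ (LinearMap.range e) ψ hle) _ hy
    rwa [Submodule.mkQ_apply, Submodule.mapQ_apply] at this
  obtain ⟨w, hw, hwy⟩ := h hψy
  obtain ⟨l, hl⟩ := (Submodule.Quotient.eq _).1 hwy
  -- `1 - φ ∘ ψ` kills `L`, so it factors through `E' ⧸ L` and preserves `Z`-torsion there.
  have hker : LinearMap.range e' ≤ LinearMap.ker (LinearMap.id - φ ∘ₗ ψ) := by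
    rintro _ ⟨l, rfl⟩
    simp [hψe, hφe]
  have hχ : y - φ (ψ y) ∈ Γ E' := by
    simpa using torsionZ_map_mem R Z ((LinearMap.range e').liftQ _ hker) _ hy
  refine ⟨φ w + (y - φ (ψ y)), add_mem (torsionZ_map_mem R Z φ w hw) hχ, ?_⟩
  rw [Submodule.mkQ_apply, Submodule.mkQ_apply, Submodule.Quotient.eq]
  refine ⟨l, ?_⟩
  rw [← hφe, hl, map_sub]
  abel

lemma surjOn_torsionZ_mkQ_range_comp {A B C E : Type u} [AddCommGroup A] [Module R A]
    [AddCommGroup B] [Module R B] [AddCommGroup C] [Module R C] [AddCommGroup E] [Module R E]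
    {e : B →ₗ[R] E} (he : Function.Injective e) {f : A →ₗ[R] B} {g : B →ₗ[R] C}
    (hfg : Function.Exact f g) (hC : Γ C = ⊥)
    (h : Set.SurjOn (LinearMap.range e).mkQ (Γ E) (Γ (E ⧸ LinearMap.range e))) :
    Set.SurjOn (LinearMap.range (e ∘ₗ f)).mkQ (Γ E) (Γ (E ⧸ LinearMap.range (e ∘ₗ f))) := by
  intro q hy
  obtain ⟨y, rfl⟩ := Submodule.mkQ_surjective _ q
  have hle : LinearMap.range (e ∘ₗ f) ≤ LinearMap.range e := LinearMap.range_comp_le_range _ _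
  obtain ⟨w, hw, hwy⟩ := h (torsionZ_map_mem R Z (Submodule.factor hle) _ hy)
  obtain ⟨b, hb⟩ : w - y ∈ LinearMap.range e := by
    rwa [Submodule.factor_mk, Submodule.mkQ_apply, Submodule.mkQ_apply,
      Submodule.Quotient.eq] at hwy
  have hwy' : (LinearMap.range (e ∘ₗ f)).mkQ (w - y) ∈ Γ (E ⧸ LinearMap.range (e ∘ₗ f)) := by
    rw [map_sub]
    exact sub_mem (torsionZ_map_mem R Z _ w hw) hy
  have hgb : g b ∈ Γ C := mem_torsionZ_of_annihilator_le hwy' fun r hr => by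
    rw [← map_smul, Submodule.mkQ_apply, Submodule.Quotient.mk_eq_zero] at hr
    obtain ⟨a, ha⟩ := hr
    rw [← map_smul, ← hfg.apply_apply_eq_zero a]
    congr 1
    apply he
    rw [map_smul, hb, ← ha, LinearMap.comp_apply]
  obtain ⟨a, rfl⟩ := (hfg b).1 (by simpa [hC] using hgb)
  exact ⟨w, hw, (Submodule.Quotient.eq _).2 ⟨a, hb⟩⟩

lemma torsionZ_eq_bot_iff_of_exact {L E E₁ : Type u} [AddCommGroup L] [Module R L]
    [AddCommGroup E] [Module R E] [AddCommGroup E₁] [Module R E₁]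
    {e : L →ₗ[R] E} {d : E →ₗ[R] E₁} (he : Function.Injective e) (hed : Function.Exact e d) :
    (∀ x ∈ Γ E, d x = 0 → x = 0) ↔ Γ L = ⊥ := by
  refine ⟨fun h => (Submodule.eq_bot_iff _).2 fun l hl => he ?_, fun h x hx hdx => ?_⟩
  · rw [map_zero]
    exact h _ (torsionZ_map_mem R Z e l hl) (hed.apply_apply_eq_zero l)
  · obtain ⟨l, rfl⟩ := (hed x).1 hdx
    have hl : l ∈ Γ L := mem_torsionZ_of_injective he hx
    rw [h, Submodule.mem_bot] at hl
    rw [hl, map_zero]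

lemma exact_torsionZ_iff_surjOn {L E E₁ E₂ : Type u} [AddCommGroup L] [Module R L]
    [AddCommGroup E] [Module R E] [AddCommGroup E₁] [Module R E₁] [AddCommGroup E₂] [Module R E₂]
    {e : L →ₗ[R] E} {d₀ : E →ₗ[R] E₁} {d₁ : E₁ →ₗ[R] E₂}
    (h₀ : Function.Exact e d₀) (h₁ : Function.Exact d₀ d₁) :
    (∀ x ∈ Γ E₁, d₁ x = 0 → ∃ w ∈ Γ E, d₀ w = x) ↔
      Set.SurjOn (LinearMap.range e).mkQ (Γ E) (Γ (E ⧸ LinearMap.range e)) := by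
  have hd₀ : LinearMap.range e ≤ LinearMap.ker d₀ :=
    fun _ ⟨l, hl⟩ => hl ▸ h₀.apply_apply_eq_zero l
  -- `d₀` embeds `E ⧸ L` into `E₁`, with image `ker d₁`.
  let d := (LinearMap.range e).liftQ d₀ hd₀
  have hd (y : E) : d ((LinearMap.range e).mkQ y) = d₀ y := rfl
  have hinj : Function.Injective d := by
    rw [← LinearMap.ker_eq_bot, Submodule.ker_liftQ_eq_bot']
    exact (LinearMap.exact_iff.1 h₀).symm
  refine ⟨fun h q hq => ?_, fun h x hx hdx => ?_⟩
  · obtain ⟨y, rfl⟩ := Submodule.mkQ_surjective _ q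
    have hy : d₀ y ∈ Γ E₁ := hd y ▸ torsionZ_map_mem R Z d _ hq
    obtain ⟨w, hw, hwy⟩ := h _ hy (h₁.apply_apply_eq_zero y)
    exact ⟨w, hw, hinj (by rw [hd, hd, hwy])⟩
  · obtain ⟨y, rfl⟩ := (h₁ x).1 hdx
    obtain ⟨w, hw, hwy⟩ := h (mem_torsionZ_of_injective hinj (f := d) (by rwa [hd]))
    exact ⟨w, hw, by rw [← hd, ← hd, hwy]⟩

section Resolutions

variable {L : Type u} [AddCommGroup L] [Module R L] (I : InjectiveResolution (ModuleCat.of R L))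

lemma subsingleton_HZ_iff_exactAt (n : ℕ) :
    Subsingleton (HZ R Z n L) ↔
      (((gammaZ R Z).mapHomologicalComplex (ComplexShape.up ℕ)).obj I.cocomplex).ExactAt n := by
  rw [HomologicalComplex.exactAt_iff_isZero_homology, ← ModuleCat.isZero_iff_subsingleton]
  exact (I.isoRightDerivedObj (gammaZ R Z) n).isZero_iff

lemma subsingleton_HZ_zero_iff :
    Subsingleton (HZ R Z 0 L) ↔
      ∀ x ∈ Γ (I.cocomplex.X 0), I.cocomplex.d 0 1 x = 0 → x = 0 := by
  rw [subsingleton_HZ_iff_exactAt I, HomologicalComplex.exactAt_iff' _ 0 0 1 (by simp) (by simp),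
    ShortComplex.moduleCat_exact_iff]
  refine ⟨fun h x hx hdx => ?_, fun h x hdx => ?_⟩
  · obtain ⟨y, hy⟩ := h ⟨x, hx⟩ (Subtype.ext hdx)
    have hd : (((gammaZ R Z).mapHomologicalComplex (ComplexShape.up ℕ)).obj I.cocomplex).d 0 0 =
        0 := HomologicalComplex.shape _ _ _ (by simp)
    simp only [HomologicalComplex.shortComplexFunctor'_obj_f, hd] at hy
    exact (congrArg Subtype.val hy).symm
  · refine ⟨0, Subtype.ext ?_⟩
    exact (map_zero _).trans (h x.1 x.2 (congrArg Subtype.val hdx)).symm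

lemma subsingleton_HZ_succ_iff (n : ℕ) :
    Subsingleton (HZ R Z (n + 1) L) ↔
      ∀ x ∈ Γ (I.cocomplex.X (n + 1)), I.cocomplex.d (n + 1) (n + 2) x = 0 →
        ∃ w ∈ Γ (I.cocomplex.X n), I.cocomplex.d n (n + 1) w = x := by
  rw [subsingleton_HZ_iff_exactAt I,
    HomologicalComplex.exactAt_iff' _ n (n + 1) (n + 2) (by simp) (by simp),
    ShortComplex.moduleCat_exact_iff]
  refine ⟨fun h x hx hdx => ?_, fun h x hdx => ?_⟩
  · obtain ⟨w, hw⟩ := h ⟨x, hx⟩ (Subtype.ext hdx)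
    exact ⟨w.1, w.2, congrArg Subtype.val hw⟩
  · obtain ⟨w, hw, hwx⟩ := h x.1 x.2 (congrArg Subtype.val hdx)
    exact ⟨⟨w, hw⟩, Subtype.ext hwx⟩

lemma CategoryTheory.InjectiveResolution.injective_ι_f_zero_hom :
    Function.Injective (I.ι.f 0).hom :=
  (ModuleCat.mono_iff_injective _).1 inferInstance

lemma CategoryTheory.InjectiveResolution.exact_ι_f_zero_hom :
    Function.Exact (I.ι.f 0).hom (I.cocomplex.d 0 1).hom :=
  LinearMap.exact_iff.2 I.exact₀.moduleCat_range_eq_ker.symm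

lemma CategoryTheory.InjectiveResolution.exact_d_zero_hom :
    Function.Exact (I.cocomplex.d 0 1).hom (I.cocomplex.d 1 2).hom :=
  LinearMap.exact_iff.2 (I.exact_succ 0).moduleCat_range_eq_ker.symm

lemma subsingleton_HZ_zero_iff_torsionZ_eq_bot :
    Subsingleton (HZ R Z 0 L) ↔ Γ L = ⊥ := by
  let I := InjectiveResolution.of (ModuleCat.of R L)
  rw [subsingleton_HZ_zero_iff I]
  exact torsionZ_eq_bot_iff_of_exact I.injective_ι_f_zero_hom I.exact_ι_f_zero_hom

lemma subsingleton_HZ_one_iff_surjOn :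
    Subsingleton (HZ R Z 1 L) ↔ Set.SurjOn (LinearMap.range (I.ι.f 0).hom).mkQ
      (Γ (I.cocomplex.X 0)) (Γ (I.cocomplex.X 0 ⧸ LinearMap.range (I.ι.f 0).hom)) := by
  rw [subsingleton_HZ_succ_iff I 0]
  exact exact_torsionZ_iff_surjOn I.exact_ι_f_zero_hom I.exact_d_zero_hom

end Resolutions

lemma subsingleton_HZ_zero_linearMap (L N : Type u) [AddCommGroup L] [Module R L]
    [AddCommGroup N] [Module R N] (hN : Subsingleton (HZ R Z 0 N)) :
    Subsingleton (HZ R Z 0 (L →ₗ[R] N)) := by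
  rw [subsingleton_HZ_zero_iff_torsionZ_eq_bot] at hN ⊢
  exact torsionZ_linearMap_eq_bot hN

lemma subsingleton_HZ_one_linearMap (M N : Type u) [AddCommGroup M] [Module R M]
    [Module.Finite R M] [AddCommGroup N] [Module R N] (h₀ : Subsingleton (HZ R Z 0 N))
    (h₁ : Subsingleton (HZ R Z 1 N)) : Subsingleton (HZ R Z 1 (M →ₗ[R] N)) := by
  rw [subsingleton_HZ_zero_iff_torsionZ_eq_bot] at h₀
  let J := InjectiveResolution.of (ModuleCat.of R N)
  let E := J.cocomplex.X 0
  have : Module.Injective R E :=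
    Module.injective_module_of_injective_object R E (inj := J.injective 0)
  let e : N →ₗ[R] E := (J.ι.f 0).hom
  obtain ⟨n, π, hπ⟩ := Module.Finite.exists_fin' R M
  -- `Hom(M, N) ↪ Hom(R^n, N) ≅ N^n ↪ E^n`, the last an embedding into an injective module.
  let eF : ((Fin n → R) →ₗ[R] N) →ₗ[R] (Fin n → E) :=
    LinearMap.piMap (fun _ => e) ∘ₗ (LinearEquiv.piRing R N (Fin n) R).toLinearMap
  have heF : Function.Injective eF :=
    (Function.Injective.piMap fun _ => J.injective_ι_f_zero_hom).comp
      (LinearEquiv.piRing R N (Fin n) R).injective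
  have hF : Set.SurjOn (LinearMap.range eF).mkQ (Γ (Fin n → E))
      (Γ ((Fin n → E) ⧸ LinearMap.range eF)) := by
    rw [LinearMap.range_comp_of_range_eq_top _ (LinearEquiv.range _)]
    exact surjOn_torsionZ_mkQ_range_piMap _ fun _ => (subsingleton_HZ_one_iff_surjOn J).1 h₁
  have hM := surjOn_torsionZ_mkQ_range_comp heF
    (LinearMap.exact_lcomp_of_exact_of_surjective N (LinearMap.exact_subtype_ker_map π) hπ)
    (torsionZ_linearMap_eq_bot h₀) hF
  let I := InjectiveResolution.of (ModuleCat.of R (M →ₗ[R] N))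
  have : Module.Injective R (I.cocomplex.X 0) :=
    Module.injective_module_of_injective_object R _ (inj := I.injective 0)
  rw [subsingleton_HZ_one_iff_surjOn I]
  exact surjOn_torsionZ_mkQ_range_of_injective
    (heF.comp (LinearMap.lcomp_injective_of_surjective π hπ)) I.injective_ι_f_zero_hom hM

lemma le_gradeZ_iff {L : Type u} [AddCommGroup L] [Module R L] {k : ℕ∞} :
    k ≤ gradeZ R Z L ↔ ∀ i : ℕ, (i : ℕ∞) < k → Subsingleton (HZ R Z i L) := by
  simp only [gradeZ, le_sInf_iff, Set.mem_ofPred_eq, forall_exists_index, and_imp]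
  refine ⟨fun h i hi => ?_, fun h _ i hb hi => hb ▸ ?_⟩
  · by_contra hn
    exact (h i i rfl (not_subsingleton_iff_nontrivial.1 hn)).not_gt hi
  · by_contra hlt
    exact not_nontrivial_iff_subsingleton.2 (h i (not_le.1 hlt)) hi

end

theorem min_two_gradeZ_le_gradeZ_hom_general (R : Type u) [CommRing R]
    (Z : Set (PrimeSpectrum R))
    (M N : Type u) [AddCommGroup M] [Module R M] [Module.Finite R M]
    [AddCommGroup N] [Module R N] :
    min 2 (gradeZ R Z N) ≤ gradeZ R Z (M →ₗ[R] N) := by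
  have hN := le_gradeZ_iff.1 (le_refl (gradeZ R Z N))
  refine le_gradeZ_iff.2 fun i hi => ?_
  obtain ⟨hi₂, hiN⟩ := lt_min_iff.1 hi
  have h₀ : Subsingleton (HZ R Z 0 N) := hN 0 (lt_of_le_of_lt bot_le hiN)
  have hi₂ : i < 2 := by exact_mod_cast hi₂
  interval_cases i
  · exact subsingleton_HZ_zero_linearMap M N h₀
  · exact subsingleton_HZ_one_linearMap M N h₀ (hN 1 hiN)

/-- `gr_R(Z, Hom_R(M, N)) ≥ min { 2, gr_R(Z, N) }`. -/
theorem min_two_gradeZ_le_gradeZ_hom (R : Type u) [CommRing R] [IsNoetherianRing R]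
    (Z : Set (PrimeSpectrum R)) (hZ : IsSpecClosed R Z)
    (M N : Type u) [AddCommGroup M] [Module R M] [Module.Finite R M]
    [AddCommGroup N] [Module R N] :
    min 2 (gradeZ R Z N) ≤ gradeZ R Z (M →ₗ[R] N) :=
  min_two_gradeZ_le_gradeZ_hom_general R Z M N
end

section
/- Let (R, m) be a commutative Noetherian local ring with depth R ≥ 1 and let I be an m-primary ideal with the property: whenever X is a finitely generated R-module and Tor_t^R(X, R/I) = 0 for some integer t ≥ 0, then pd_R(X) < t. Then H^1_m(M ⊗_R I) ≠ 0 for every nonzero finitely generated R-module M that is locally free on the punctured spectrum of R and has depth_R(M) ≥ 1. -/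
/-! Common definitions: local cohomology with respect to specialization-closed subsets,
depth, grade, homological dimensions, Tate homology, etc. -/

open CategoryTheory

universe u

/-!
The multiplication map `q : M ⊗ I → M` has `m`-torsion kernel because `M` is locally free on the
punctured spectrum, and its image `I M` is a proper submodule by Nakayama, with `M ⧸ I M` killed by
the `m`-primary ideal `I`. Since `Γ_m(M) = 0` by the depth assumption, any `m₀ ∉ I M` yields a
nonzero class in `H¹_m(M ⊗ I)`: embed `M ⊗ I` into the injective module `T × E` by
`x ↦ (k x, e (q x))`, where `e : M ↪ E` and `k` is injective on `ker q` with values in an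
`m`-torsion injective module `T`; the class of `(0, e m₀)` is torsion modulo `M ⊗ I` but is not the
class of a torsion element of `T × E`.
-/

namespace CategoryTheory.InjectiveResolution

variable {C : Type*} [Category C] [Abelian C]

/-- `J.ι.f 0`, retyped with source `X` instead of `((single₀ C).obj X).X 0` so that it composes
syntactically with morphisms into `X`. -/
def augmentation {X : C} (J : InjectiveResolution X) : X ⟶ J.cocomplex.X 0 :=
  J.ι.f 0

@[simp]
lemma augmentation_comp_d {X : C} (J : InjectiveResolution X) :
    J.augmentation ≫ J.cocomplex.d 0 1 = 0 :=
  J.ι_f_zero_comp_complex_d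

instance {X : C} (J : InjectiveResolution X) : Mono J.augmentation :=
  inferInstanceAs (Mono (J.ι.f 0))

/-- The injective resolution `S.X₂ → J⁰ → J¹ → ⋯` of `S.X₁`. -/
noncomputable def ofShortExact {S : ShortComplex C} (hS : S.ShortExact) [Injective S.X₂]
    (J : InjectiveResolution S.X₃) : InjectiveResolution S.X₁ where
  cocomplex := J.cocomplex.augment (S.g ≫ J.augmentation) (by simp)
  injective
    | 0 => (inferInstance : Injective S.X₂)
    | n + 1 => J.injective n
  ι :=
    { f := fun | 0 => S.f | _ + 1 => 0
      comm' := by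
        rintro (_ | i) j (rfl : _ = j)
        · exact (S.zero_assoc _).trans (Limits.zero_comp.trans Limits.comp_zero.symm)
        · exact Limits.zero_comp.trans Limits.comp_zero.symm }
  quasiIso := ⟨fun n ↦ by
    have := hS.mono_f
    have := hS.epi_g
    rcases n with _ | _ | n
    · rw [CochainComplex.quasiIsoAt₀_iff, ShortComplex.quasiIso_iff_of_zeros]
      · exact ⟨(ShortComplex.exact_iff_of_epi_of_isIso_of_mono
          (S₂ := ShortComplex.mk S.f (S.g ≫ J.augmentation) (by simp))
          { τ₁ := 𝟙 S.X₁, τ₂ := 𝟙 S.X₂, τ₃ := J.augmentation }).1 hS.exact, hS.mono_f⟩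
      all_goals rfl
    · rw [quasiIsoAt_iff_exactAt _ _ (CochainComplex.exactAt_succ_single_obj _ _),
        HomologicalComplex.exactAt_iff' _ 0 1 2 (by simp) (by simp)]
      exact (ShortComplex.exact_iff_of_epi_of_isIso_of_mono
        (S₁ := ShortComplex.mk (S.g ≫ J.augmentation) (J.cocomplex.d 0 1) (by simp))
        (S₂ := ShortComplex.mk _ _ J.augmentation_comp_d)
        { τ₁ := S.g, τ₂ := 𝟙 _, τ₃ := 𝟙 _ }).2 J.exact₀
    · rw [quasiIsoAt_iff_exactAt _ _ (CochainComplex.exactAt_succ_single_obj _ _),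
        HomologicalComplex.exactAt_iff' _ (n + 1) (n + 2) (n + 3) (by simp) (by simp)]
      exact J.exact_succ n⟩

end CategoryTheory.InjectiveResolution

namespace Module

variable {R : Type u} [CommRing R]

instance Injective.prod (P Q : Type u) [AddCommGroup P] [Module R P] [AddCommGroup Q]
    [Module R Q] [Module.Injective R P] [Module.Injective R Q] : Module.Injective R (P × Q) :=
  ⟨fun X Y _ _ _ _ f hf g ↦ by
    obtain ⟨h₁, hh₁⟩ := Injective.extension_property R P X Y f hf (LinearMap.fst R P Q ∘ₗ g)
    obtain ⟨h₂, hh₂⟩ := Injective.extension_property R Q X Y f hf (LinearMap.snd R P Q ∘ₗ g)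
    exact ⟨h₁.prod h₂, fun x ↦ Prod.ext (LinearMap.congr_fun hh₁ x) (LinearMap.congr_fun hh₂ x)⟩⟩

variable (R) in
lemma exists_injective_embedding (N : Type u) [AddCommGroup N] [Module R N] :
    ∃ (E : Type u) (_ : AddCommGroup E) (_ : Module R E), Module.Injective R E ∧
      ∃ f : N →ₗ[R] E, Function.Injective f :=
  let E : ModuleCat.{u} R := CategoryTheory.Injective.under (ModuleCat.of R N)
  ⟨E, _, _, Module.injective_module_of_injective_object R E
    (inj := inferInstanceAs (CategoryTheory.Injective E)),
    (CategoryTheory.Injective.ι (ModuleCat.of R N)).hom,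
    (ModuleCat.mono_iff_injective _).1 inferInstance⟩

lemma Injective.exists_smul_eq_of_forall_mem_eq_zero {E : Type u} [AddCommGroup E] [Module R E]
    [Module.Injective R E] {J K : Ideal R} (g : J →ₗ[R] E)
    (hg : ∀ x : J, (x : R) ∈ K → g x = 0) :
    ∃ y : E, (∀ a ∈ K, a • y = 0) ∧ ∀ x : J, (x : R) • y = g x := by
  let θ : J →ₗ[R] R ⧸ K := K.mkQ ∘ₗ J.subtype
  have hθ : LinearMap.ker θ ≤ LinearMap.ker g := fun x hx ↦
    hg x ((Submodule.Quotient.mk_eq_zero _).1 hx)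
  obtain ⟨h, hh⟩ := Injective.extension_property R E _ _ ((LinearMap.ker θ).liftQ θ le_rfl)
    (LinearMap.ker_eq_bot.1 (Submodule.ker_liftQ_eq_bot' _ θ rfl)) ((LinearMap.ker θ).liftQ g hθ)
  refine ⟨h (Submodule.Quotient.mk 1), fun a ha ↦ ?_, fun x ↦ ?_⟩
  · rw [← map_smul, ← Submodule.Quotient.mk_smul, smul_eq_mul, mul_one,
      (Submodule.Quotient.mk_eq_zero _).2 ha, map_zero]
  · rw [← map_smul, ← Submodule.Quotient.mk_smul, smul_eq_mul, mul_one]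
    exact LinearMap.congr_fun hh (Submodule.Quotient.mk x)

end Module

section LocalCohomology

open CategoryTheory

variable {R : Type u} [CommRing R] {Z : Set (PrimeSpectrum R)}

lemma nontrivial_HZ_one_of_not_torsionZ_le_map {N E : Type u} [AddCommGroup N] [Module R N]
    [AddCommGroup E] [Module R E] [Module.Injective R E] (j : N →ₗ[R] E)
    (hj : Function.Injective j)
    (h : ¬ torsionZ R Z (E ⧸ LinearMap.range j) ≤
      (torsionZ R Z E).map (LinearMap.range j).mkQ) :
    Nontrivial (HZ R Z 1 N) := by
  obtain ⟨c, hc, hnl⟩ := Set.not_subset.1 h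
  let S := ModuleCat.shortComplexOfCompEqZero _ _ j.exact_map_mkQ_range.linearMap_comp_eq_zero
  have hS : S.ShortExact :=
    ModuleCat.shortComplex_shortExact S j.exact_map_mkQ_range hj (Submodule.mkQ_surjective _)
  have : Injective S.X₂ := Module.injective_object_of_injective_module R E
  let J := InjectiveResolution.of S.X₃
  let res := InjectiveResolution.ofShortExact hS J
  let K := ((gammaZ R Z).mapHomologicalComplex _).obj res.cocomplex
  -- `H¹` is computed by `Γ(E) → Γ(J⁰) → Γ(J¹)`, where the image of `c` in `Γ(J⁰)` is a cycle
  -- but not a boundary.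
  suffices ¬ K.ExactAt 1 by
    rw [HomologicalComplex.exactAt_iff_isZero_homology, ModuleCat.isZero_iff_subsingleton,
      not_subsingleton_iff_nontrivial] at this
    exact @Equiv.nontrivial _ _ (res.isoRightDerivedObj (gammaZ R Z) 1).toLinearEquiv.toEquiv this
  rw [K.exactAt_iff' 0 1 2 (by simp) (by simp), ShortComplex.moduleCat_exact_iff]
  intro hex
  let z : torsionZ R Z (J.cocomplex.X 0) := ⟨J.augmentation c, torsionZ_map_mem R Z _ c hc⟩
  have hz : (K.sc' 0 1 2).g z = 0 := Subtype.ext <|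
    show J.cocomplex.d 0 1 (J.augmentation c) = 0 from
      ConcreteCategory.congr_hom J.augmentation_comp_d c
  obtain ⟨w, hw⟩ := hex z hz
  have hinj : Function.Injective J.augmentation := (ModuleCat.mono_iff_injective _).1 inferInstance
  exact hnl ⟨w.1, w.2, hinj (congrArg Subtype.val hw)⟩

end LocalCohomology

section Torsion

variable {R : Type u} [CommRing R] {M N : Type u} [AddCommGroup M] [Module R M]
  [AddCommGroup N] [Module R N]

lemma mem_torsionZ_of_injective_s8 {Z : Set (PrimeSpectrum R)} {f : M →ₗ[R] N}
    (hf : Function.Injective f) {x : M} (hx : f x ∈ torsionZ R Z N) : x ∈ torsionZ R Z M :=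
  fun p hp ↦ hx p fun r hr ↦ hp <| (Submodule.mem_annihilator_span_singleton _ _).2 <| hf <| by
    rw [map_smul, (Submodule.mem_annihilator_span_singleton _ _).1 hr, map_zero]

open IsLocalRing

variable [IsLocalRing R]

lemma mem_torsionZ_maxSet_iff_le_radical {x : M} :
    x ∈ torsionZ R (maxSet R) M ↔ maximalIdeal R ≤ (R ∙ x).annihilator.radical := by
  refine ⟨fun hx ↦ ?_, fun h p hp ↦ h.trans ((p.isPrime.radical_le_iff).2 hp)⟩
  rw [Ideal.radical_eq_sInf]
  exact le_sInf fun p ⟨hxp, hp⟩ ↦ hx ⟨p, hp⟩ hxp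

lemma mem_torsionZ_maxSet_iff {x : M} :
    x ∈ torsionZ R (maxSet R) M ↔ ∀ a ∈ maximalIdeal R, ∃ n : ℕ, a ^ n • x = 0 := by
  simp only [mem_torsionZ_maxSet_iff_le_radical, SetLike.le_def, Ideal.mem_radical_iff,
    Submodule.mem_annihilator_span_singleton]

lemma exists_pow_le_annihilator_of_le_torsionZ [IsNoetherianRing R] {P : Submodule R M}
    (hP : P.FG) (hPt : P ≤ torsionZ R (maxSet R) M) :
    ∃ n : ℕ, maximalIdeal R ^ n ≤ P.annihilator := by
  induction P, hP using Submodule.fg_induction with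
  | singleton x =>
    exact Ideal.exists_pow_le_of_le_radical_of_fg
      (mem_torsionZ_maxSet_iff_le_radical.1 (hPt (Submodule.mem_span_singleton_self x)))
      (IsNoetherian.noetherian _)
  | sup P₁ P₂ _ _ ih₁ ih₂ =>
    obtain ⟨a, ha⟩ := ih₁ (le_sup_left.trans hPt)
    obtain ⟨b, hb⟩ := ih₂ (le_sup_right.trans hPt)
    refine ⟨a + b, ?_⟩
    rw [Submodule.annihilator_sup, pow_add]
    exact le_inf (Ideal.mul_le_left.trans ha) (Ideal.mul_le_right.trans hb)

theorem Module.Injective.torsionZ_maxSet [IsNoetherianRing R] [Module.Injective R M] :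
    Module.Injective R (torsionZ R (maxSet R) M) := by
  -- Baer's criterion: the image of `g` is killed by `m ^ n`, so by Artin–Rees `g` vanishes on
  -- `J ∩ m ^ (k + n)` and extends through `R ⧸ m ^ (k + n)`.
  refine Module.Baer.injective fun J g ↦ ?_
  obtain ⟨n, hn⟩ := exists_pow_le_annihilator_of_le_torsionZ (P := LinearMap.range g)
    (LinearMap.range_eq_map g ▸ Module.Finite.fg_top.map g)
    fun y _ ↦ mem_torsionZ_of_injective_s8 (Submodule.injective_subtype _) y.2
  obtain ⟨k, hk⟩ := Ideal.exists_pow_inf_eq_pow_smul (maximalIdeal R) (J : Submodule R R)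
  have hg : ∀ x : J, (x : R) ∈ maximalIdeal R ^ (k + n) → g x = 0 := by
    intro x hx
    have hxJ : (x : R) ∈ (maximalIdeal R ^ n • ⊤ : Submodule R J).map J.subtype := by
      rw [Submodule.map_smul'', Submodule.map_top, Submodule.range_subtype]
      have hxAR : (x : R) ∈ maximalIdeal R ^ n • (maximalIdeal R ^ k • ⊤ ⊓ J : Submodule R R) := by
        rw [← Nat.add_sub_cancel n k, ← hk (n + k) le_add_self, Ideal.smul_eq_mul, Ideal.mul_top,
          add_comm]
        exact ⟨hx, x.2⟩
      exact Submodule.smul_mono le_rfl inf_le_right hxAR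
    obtain ⟨z, hz, hzx⟩ := hxJ
    obtain rfl : z = x := Subtype.ext hzx
    have : g z ∈ maximalIdeal R ^ n • LinearMap.range g := by
      rw [LinearMap.range_eq_map, ← Submodule.map_smul'']
      exact ⟨z, hz, rfl⟩
    rwa [Submodule.le_annihilator_iff.1 hn, Submodule.mem_bot] at this
  obtain ⟨y, hyK, hyJ⟩ := Module.Injective.exists_smul_eq_of_forall_mem_eq_zero
    ((torsionZ R (maxSet R) M).subtype ∘ₗ g) fun x hx ↦ by simp [hg x hx]
  have hy : y ∈ torsionZ R (maxSet R) M :=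
    mem_torsionZ_maxSet_iff.2 fun a ha ↦ ⟨k + n, hyK _ (Ideal.pow_mem_pow ha _)⟩
  exact ⟨LinearMap.toSpanSingleton R _ ⟨y, hy⟩, fun x hx ↦ Subtype.ext (hyJ ⟨x, hx⟩)⟩

lemma exists_isSMulRegular_of_one_le_moduleDepth (h : 1 ≤ moduleDepth R M) :
    ∃ r ∈ maximalIdeal R, IsSMulRegular M r := by
  by_contra! hc
  have h0 : moduleDepth R M ≤ 0 := by
    refine sSup_le ?_
    rintro _ ⟨_ | ⟨r, rs⟩, rfl, hmem, hreg⟩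
    · simp
    · exact absurd ((RingTheory.Sequence.isWeaklyRegular_cons_iff M r rs).1 hreg).1
        (hc r (hmem r List.mem_cons_self))
  exact absurd (h.trans h0) (by simp)

lemma torsionZ_maxSet_eq_bot_of_one_le_moduleDepth (h : 1 ≤ moduleDepth R M) :
    torsionZ R (maxSet R) M = ⊥ := by
  obtain ⟨r, hr, hreg⟩ := exists_isSMulRegular_of_one_le_moduleDepth h
  refine (Submodule.eq_bot_iff _).2 fun x hx ↦ ?_
  obtain ⟨n, hn⟩ := mem_torsionZ_maxSet_iff.1 hx r hr
  exact hreg.pow n (hn.trans (smul_zero _).symm)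

lemma exists_torsion_injective_disjoint_ker [IsNoetherianRing R] {K : Submodule R N}
    (hK : K ≤ torsionZ R (maxSet R) N) :
    ∃ (T : Type u) (_ : AddCommGroup T) (_ : Module R T), Module.Injective R T ∧
      (∀ t : T, t ∈ torsionZ R (maxSet R) T) ∧ ∃ k : N →ₗ[R] T, Disjoint K (LinearMap.ker k) := by
  obtain ⟨U, _, _, _, u, hu⟩ := Module.exists_injective_embedding R N
  let k₀ : K →ₗ[R] torsionZ R (maxSet R) U :=
    (u ∘ₗ K.subtype).codRestrict _ fun x ↦ torsionZ_map_mem R _ u x (hK x.2)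
  have := Module.Injective.torsionZ_maxSet (R := R) (M := U)
  obtain ⟨k, hk⟩ := Module.Injective.extension_property R _ K N K.subtype K.injective_subtype k₀
  refine ⟨torsionZ R (maxSet R) U, _, _, this,
    fun t ↦ mem_torsionZ_of_injective_s8 (Submodule.injective_subtype _) t.2, k,
    Submodule.disjoint_def.2 fun x hxK hxk ↦ hu ?_⟩
  rw [map_zero]
  exact congrArg Subtype.val ((LinearMap.congr_fun hk ⟨x, hxK⟩).symm.trans hxk)

theorem nontrivial_HZ_one_of_ker_le_torsionZ [IsNoetherianRing R] (q : N →ₗ[R] M)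
    (hq : LinearMap.ker q ≤ torsionZ R (maxSet R) N) (hM : 1 ≤ moduleDepth R M) {m₀ : M}
    (hm₀ : ∀ a ∈ maximalIdeal R, ∃ t : ℕ, a ^ t • m₀ ∈ LinearMap.range q)
    (hm₀q : m₀ ∉ LinearMap.range q) : Nontrivial (HZ R (maxSet R) 1 N) := by
  obtain ⟨T, _, _, _, hT, k, hk⟩ := exists_torsion_injective_disjoint_ker hq
  obtain ⟨E, _, _, _, e, he⟩ := Module.exists_injective_embedding R M
  let j : N →ₗ[R] T × E := k.prod (e ∘ₗ q)
  have hj : Function.Injective j := by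
    refine (injective_iff_map_eq_zero j).2 fun x hx ↦ ?_
    have hqx : q x = 0 := he ((congrArg Prod.snd hx).trans (map_zero e).symm)
    exact Submodule.disjoint_def.1 hk x hqx (congrArg Prod.fst hx)
  let c : (T × E) ⧸ LinearMap.range j := Submodule.Quotient.mk (0, e m₀)
  have hc : c ∈ torsionZ R (maxSet R) ((T × E) ⧸ LinearMap.range j) := by
    refine mem_torsionZ_maxSet_iff.2 fun a ha ↦ ?_
    obtain ⟨t, x, hx⟩ := hm₀ a ha
    obtain ⟨n, hn⟩ := mem_torsionZ_maxSet_iff.1 (hT (k x)) a ha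
    refine ⟨n + t, (Submodule.Quotient.mk_eq_zero _).2 ⟨a ^ n • x, ?_⟩⟩
    ext <;> simp [j, hx, hn, pow_add, mul_smul]
  refine nontrivial_HZ_one_of_not_torsionZ_le_map j hj fun hle ↦ hm₀q ?_
  obtain ⟨g, hg, hgc⟩ := hle hc
  obtain ⟨x, hx⟩ := (Submodule.Quotient.eq _).1 hgc
  have hsum : m₀ + q x ∈ torsionZ R (maxSet R) M := by
    refine mem_torsionZ_of_injective_s8 he ?_
    rw [map_add, show e (q x) = g.2 - e m₀ from congrArg Prod.snd hx, add_sub_cancel]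
    exact torsionZ_map_mem R _ (LinearMap.snd R T E) g hg
  rw [torsionZ_maxSet_eq_bot_of_one_le_moduleDepth hM, Submodule.mem_bot] at hsum
  exact ⟨-x, by rw [map_neg]; exact neg_eq_of_add_eq_zero_left hsum⟩

end Torsion

section Tensor

open TensorProduct

variable {R : Type u} [CommRing R] {M : Type u} [AddCommGroup M] [Module R M]

lemma exists_smul_eq_zero_of_lTensor_eq_zero (S : Submonoid R)
    [Module.Flat R (LocalizedModule S M)] {A B : Type u} [AddCommGroup A] [Module R A]
    [AddCommGroup B] [Module R B] {f : A →ₗ[R] B} (hf : Function.Injective f) {x : M ⊗[R] A}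
    (hx : f.lTensor M x = 0) : ∃ s ∈ S, s • x = 0 := by
  let ℓ := LocalizedModule.mkLinearMap S M
  have h : f.lTensor _ (ℓ.rTensor A x) = 0 := by
    rw [← LinearMap.comp_apply, LinearMap.lTensor_comp_rTensor, ← LinearMap.rTensor_comp_lTensor,
      LinearMap.comp_apply, hx, map_zero]
  have h' : AlgebraTensorModule.rTensor R A ℓ x = 0 :=
    Module.Flat.lTensor_preserves_injective_linearMap f hf (h.trans (map_zero _).symm)
  obtain ⟨s, hs⟩ := (IsLocalizedModule.eq_zero_iff S (AlgebraTensorModule.rTensor R A ℓ)).1 h'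
  exact ⟨s, s.2, hs⟩

lemma range_rid_comp_lTensor_subtype_le (I : Ideal R) :
    LinearMap.range ((TensorProduct.rid R M).toLinearMap ∘ₗ I.subtype.lTensor M) ≤ I • ⊤ := by
  rintro _ ⟨x, rfl⟩
  induction x using TensorProduct.induction_on with
  | zero => simp
  | tmul m i => simpa using Submodule.smul_mem_smul i.2 Submodule.mem_top
  | add x y hx hy => simpa using add_mem hx hy

variable [IsLocalRing R]

lemma ker_lTensor_subtype_le_torsionZ (hM : LocFreeOnPunctured R M) (I : Ideal R) :
    LinearMap.ker (I.subtype.lTensor M) ≤ torsionZ R (maxSet R) (M ⊗[R] I) := by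
  intro x hx p hp
  by_contra hpm
  have := hM p fun h ↦ hpm h.ge
  have : Module.Flat R (LocalizedModule p.asIdeal.primeCompl M) :=
    Module.Flat.trans R (Localization.AtPrime p.asIdeal) _
  obtain ⟨s, hs, hsx⟩ :=
    exists_smul_eq_zero_of_lTensor_eq_zero p.asIdeal.primeCompl I.injective_subtype hx
  exact hs (hp ((Submodule.mem_annihilator_span_singleton _ _).2 hsx))

end Tensor

theorem localCohomology_one_tensor_ideal_ne_zero_general (R : Type u) [CommRing R] [IsLocalRing R]
    [IsNoetherianRing R]
    (I : Ideal R) (hI : I.radical = IsLocalRing.maximalIdeal R)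
    (M : Type u) [AddCommGroup M] [Module R M] [Module.Finite R M]
    (hMnz : Nontrivial M) (hMfree : LocFreeOnPunctured R M)
    (hMdepth : 1 ≤ moduleDepth R M) :
    Nontrivial (HZ R (maxSet R) 1 (TensorProduct R M I)) := by
  let q := (TensorProduct.rid R M).toLinearMap ∘ₗ I.subtype.lTensor M
  have hIm : I ≤ IsLocalRing.maximalIdeal R := hI ▸ Ideal.le_radical
  have hIM : I • (⊤ : Submodule R M) ≠ ⊤ :=
    (Submodule.top_ne_ideal_smul_of_le_jacobson_annihilator
      (hIm.trans (IsLocalRing.maximalIdeal_le_jacobson _))).symm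
  obtain ⟨m₀, -, hm₀⟩ := SetLike.exists_of_lt hIM.lt_top
  refine nontrivial_HZ_one_of_ker_le_torsionZ q ?_ hMdepth (m₀ := m₀) (fun a ha ↦ ?_)
    fun h ↦ hm₀ (range_rid_comp_lTensor_subtype_le I h)
  · rw [LinearEquiv.ker_comp]
    exact ker_lTensor_subtype_le_torsionZ hMfree I
  · obtain ⟨t, ht⟩ : a ∈ I.radical := hI ▸ ha
    exact ⟨t, m₀ ⊗ₜ ⟨a ^ t, ht⟩, by simp [q]⟩

/-- If `depth R ≥ 1` and `I` is an `m`-primary ideal such that the vanishing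
of `Tor_t(X, R/I)` forces `pd X < t` for every finitely generated `X`, then
`H^1_m(M ⊗_R I) ≠ 0` for every nonzero finitely generated `M` of positive depth which is
locally free on the punctured spectrum. -/
theorem localCohomology_one_tensor_ideal_ne_zero (R : Type u) [CommRing R] [IsLocalRing R]
    [IsNoetherianRing R] (hdepth : 1 ≤ moduleDepth R R)
    (I : Ideal R) (hI : I.radical = IsLocalRing.maximalIdeal R)
    (hrigid : ∀ (X : Type u) [AddCommGroup X] [Module R X] [Module.Finite R X] (t : ℕ),
      Subsingleton (TorMod R t X (R ⧸ I)) → projDim R X < ((t : ℕ∞) : WithBot ℕ∞))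
    (M : Type u) [AddCommGroup M] [Module R M] [Module.Finite R M]
    (hMnz : Nontrivial M) (hMfree : LocFreeOnPunctured R M)
    (hMdepth : 1 ≤ moduleDepth R M) :
    Nontrivial (HZ R (maxSet R) 1 (TensorProduct R M I)) :=
  localCohomology_one_tensor_ideal_ne_zero_general R I hI M hMnz hMfree hMdepth
end
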